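/- arXiv:2011.09758 — 2 statements merged into one kernel-verified Lean document; each statement's English description precedes it below -/
import Mathlib

section
/- Let U be a universe of separations, S ⊆ U a structurally submodular separation system, and 𝒫 a set of profiles of S. Then S contains a tree set T, i.e. a nested set T ⊆ S no element of which is trivial in S or has trivial inverse, such that any two distinct profiles in 𝒫 are distinguished by some separation in T. -/
namespace SepDemo

/-- A universe of separations: a finite lattice with an order-reversing involution. -/
structure SepUniverse (U : Type*) [Lattice U] [Fintype U] where
  inv : U → U
  inv_inv : ∀ s, inv (inv s) = s
  le_iff : ∀ r s : U, r ≤ s ↔ inv s ≤ inv r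

/-- A submodular universe: a universe with a submodular order function. -/
structure SubmodUniverse (U : Type*) [Lattice U] [Fintype U] extends SepUniverse U where
  ord : U → ℕ
  ord_inv : ∀ s, ord (inv s) = ord s
  submod : ∀ s t : U, ord (s ⊔ t) + ord (s ⊓ t) ≤ ord s + ord t

variable {U : Type*} [Lattice U] [Fintype U]

/-- A separation system inside a universe: a subset closed under the involution. -/
def SepSystem (𝒰 : SepUniverse U) (S : Set U) : Prop :=
  ∀ s ∈ S, 𝒰.inv s ∈ S

/-- An orientation of `S`: contains, for each `s ∈ S`, exactly one of `s`, `s*`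
(just `s` itself if `s` is degenerate). -/
def IsOrientation (𝒰 : SepUniverse U) (S O : Set U) : Prop :=
  O ⊆ S ∧ ∀ s ∈ S, (s ∈ O ∨ 𝒰.inv s ∈ O) ∧ (s ∈ O → 𝒰.inv s ∈ O → s = 𝒰.inv s)

/-- Consistency: no `r, s ∈ O` with `{r,r*} ≠ {s,s*}` and `r* ≤ s`. -/
def Consistent (𝒰 : SepUniverse U) (O : Set U) : Prop :=
  ∀ r ∈ O, ∀ s ∈ O, ({r, 𝒰.inv r} : Set U) ≠ ({s, 𝒰.inv s} : Set U) → ¬ 𝒰.inv r ≤ s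

/-- A profile of `S`: a consistent orientation satisfying the profile property. -/
def IsProfile (𝒰 : SepUniverse U) (S P : Set U) : Prop :=
  IsOrientation 𝒰 S P ∧ Consistent 𝒰 P ∧ ∀ r ∈ P, ∀ s ∈ P, 𝒰.inv (r ⊔ s) ∉ P

/-- Regular: contains no cosmall separation. -/
def Regular (𝒰 : SepUniverse U) (P : Set U) : Prop :=
  ∀ s ∈ P, ¬ 𝒰.inv s ≤ s

/-- Two separations are nested. -/
def Nested (𝒰 : SepUniverse U) (r s : U) : Prop :=
  r ≤ s ∨ r ≤ 𝒰.inv s ∨ 𝒰.inv r ≤ s ∨ 𝒰.inv r ≤ 𝒰.inv s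

/-- A set of separations is nested if its members are pairwise nested. -/
def NestedSet (𝒰 : SepUniverse U) (N : Set U) : Prop :=
  ∀ r ∈ N, ∀ s ∈ N, Nested 𝒰 r s

/-- `s` distinguishes the orientations `O₁` and `O₂`. -/
def Distinguishes (𝒰 : SepUniverse U) (s : U) (O₁ O₂ : Set U) : Prop :=
  (s ∈ O₁ ∧ 𝒰.inv s ∈ O₂) ∨ (𝒰.inv s ∈ O₁ ∧ s ∈ O₂)

/-- Two orientations are distinguishable. -/
def Distinguishable (𝒰 : SepUniverse U) (P Q : Set U) : Prop :=
  ∃ s : U, Distinguishes 𝒰 s P Q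

/-- Structural submodularity of a separation system. -/
def StructSubmodular (S : Set U) : Prop :=
  ∀ s ∈ S, ∀ t ∈ S, s ⊔ t ∈ S ∨ s ⊓ t ∈ S

/-- `s` is trivial in `S`. -/
def IsTrivialIn (𝒰 : SepUniverse U) (S : Set U) (s : U) : Prop :=
  ∃ r ∈ S, ({r, 𝒰.inv r} : Set U) ≠ ({s, 𝒰.inv s} : Set U) ∧ s ≤ r ∧ s ≤ 𝒰.inv r

/-- A star of separations. -/
def IsStar (𝒰 : SepUniverse U) (σ : Set U) : Prop :=
  ∀ r ∈ σ, ∀ s ∈ σ, r ≠ s → r ≤ 𝒰.inv s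

/-- The shift `σ_x^{s₀}` of a star `σ` at `x ∈ σ` to `s₀`. -/
def shiftStar (𝒰 : SepUniverse U) (σ : Set U) (x s₀ : U) : Set U :=
  insert (x ⊔ s₀) ((fun y => y ⊓ 𝒰.inv s₀) '' (σ \ {x}))

/-- `s₀` emulates `r` in `S`. -/
def Emulates (𝒰 : SepUniverse U) (S : Set U) (s₀ r : U) : Prop :=
  r ≤ s₀ ∧ ∀ t ∈ S, t ≠ 𝒰.inv r → r ≤ t → t ⊔ s₀ ∈ S

/-- `s₀` emulates `r` in `S` for a set `F` of stars. -/
def EmulatesFor (𝒰 : SepUniverse U) (S : Set U) (F : Set (Set U)) (s₀ r : U) : Prop :=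
  Emulates 𝒰 S s₀ r ∧
    ∀ σ ∈ F, 𝒰.inv r ∉ σ → ∀ x ∈ σ, r ≤ x → shiftStar 𝒰 σ x s₀ ∈ F

/-- `F` forces `s`. -/
def Forces (𝒰 : SepUniverse U) (F : Set (Set U)) (s : U) : Prop :=
  ({𝒰.inv s} : Set U) ∈ F

/-- `S` is `F`-separable. -/
def FSeparable (𝒰 : SepUniverse U) (S : Set U) (F : Set (Set U)) : Prop :=
  ∀ r₁ ∈ S, ∀ r₂ ∈ S,
    ¬ IsTrivialIn 𝒰 S r₁ → ¬ IsTrivialIn 𝒰 S r₂ →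
    r₁ ≠ 𝒰.inv r₁ → r₂ ≠ 𝒰.inv r₂ →
    ¬ Forces 𝒰 F r₁ → ¬ Forces 𝒰 F r₂ →
    r₁ ≤ 𝒰.inv r₂ →
    ∃ s₀ ∈ S, r₁ ≤ s₀ ∧ s₀ ≤ 𝒰.inv r₂ ∧
      EmulatesFor 𝒰 S F s₀ r₁ ∧ EmulatesFor 𝒰 S F (𝒰.inv s₀) r₂

/-- `r` is `F`-critical. -/
def FCritical (𝒰 : SepUniverse U) (F : Set (Set U)) (r : U) : Prop :=
  (∃ σ ∈ F, r ∈ σ) ∧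
    ¬ ∃ σ' ∈ F, σ' ∩ ({r, 𝒰.inv r} : Set U) = ({𝒰.inv r} : Set U)

/-- `S` is critically `F`-separable. -/
def CritFSeparable (𝒰 : SepUniverse U) (S : Set U) (F : Set (Set U)) : Prop :=
  ∀ r₁ ∈ S, ∀ r₂ ∈ S, FCritical 𝒰 F r₁ → FCritical 𝒰 F r₂ → r₁ ≤ 𝒰.inv r₂ →
    ∃ s₀ ∈ S, EmulatesFor 𝒰 S F s₀ r₁ ∧ EmulatesFor 𝒰 S F (𝒰.inv s₀) r₂

/-- An `F`-tangle of `S`: a consistent orientation including no member of `F`. -/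
def FTangle (𝒰 : SepUniverse U) (S : Set U) (F : Set (Set U)) (O : Set U) : Prop :=
  IsOrientation 𝒰 S O ∧ Consistent 𝒰 O ∧ ∀ σ ∈ F, ¬ σ ⊆ O

/-- `F` is standard for `S`: it forces all trivial separations of `S`. -/
def StandardFor (𝒰 : SepUniverse U) (S : Set U) (F : Set (Set U)) : Prop :=
  ∀ r ∈ S, IsTrivialIn 𝒰 S r → ({𝒰.inv r} : Set U) ∈ F

/-- An `S`-tree: a finite tree together with edge labels in `S` commuting with
the involution. -/
structure STree (𝒰 : SepUniverse U) (S : Set U) where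
  V : Type
  fintypeV : Fintype V
  G : SimpleGraph V
  isTree : G.IsTree
  label : V → V → U
  label_mem : ∀ x y, G.Adj x y → label x y ∈ S
  label_inv : ∀ x y, G.Adj x y → label y x = 𝒰.inv (label x y)

namespace STree

variable {𝒰 : SepUniverse U} {S : Set U}

/-- The star `α(t)` associated with a node `t`. -/
def nodeStar (T : STree 𝒰 S) (t : T.V) : Set U :=
  {u | ∃ s, T.G.Adj s t ∧ T.label s t = u}

/-- The `S`-tree is over `F`. -/
def Over (T : STree 𝒰 S) (F : Set (Set U)) : Prop :=
  ∀ t : T.V, T.nodeStar t ∈ F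

/-- Irredundance of an `S`-tree. -/
def Irredundant (T : STree 𝒰 S) : Prop :=
  ∀ t t' t'' : T.V, T.G.Adj t' t → T.G.Adj t'' t → t' ≠ t'' →
    T.label t' t ≠ T.label t'' t

/-- The set of edge labels of the tree. -/
def labels (T : STree 𝒰 S) : Set U :=
  {u | ∃ x y, T.G.Adj x y ∧ T.label x y = u}

/-- `t` is a sink of the orientation of the tree induced by `P`. -/
def IsSinkOf (T : STree 𝒰 S) (P : Set U) (t : T.V) : Prop :=
  ∀ s, T.G.Adj s t → T.label s t ∈ P

/-- The degree of a node. -/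
noncomputable def deg (T : STree 𝒰 S) (t : T.V) : ℕ :=
  (T.G.neighborSet t).ncard

/-- The maximum degree of the tree. -/
noncomputable def maxDeg (T : STree 𝒰 S) : ℕ :=
  sSup {n | ∃ t : T.V, T.deg t = n}

end STree

/-- A tree of tangles for `S`: an irredundant `S`-tree whose edge labels
distinguish every two distinct regular profiles of `S`. -/
def TreeOfTangles (𝒰 : SepUniverse U) (S : Set U) (T : STree 𝒰 S) : Prop :=
  T.Irredundant ∧
    ∀ P Q : Set U, IsProfile 𝒰 S P → Regular 𝒰 P → IsProfile 𝒰 S Q → Regular 𝒰 Q →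
      P ≠ Q → ∃ s ∈ T.labels, Distinguishes 𝒰 s P Q

/-- `δ(P)`: the minimum size of a subset of `P` distinguishing `P` from every
other regular profile of `S`. -/
noncomputable def deltaP (𝒰 : SepUniverse U) (S P : Set U) : ℕ :=
  sInf {n | ∃ D : Set U, D ⊆ P ∧ D.ncard = n ∧
    ∀ Q : Set U, IsProfile 𝒰 S Q → Regular 𝒰 Q → Q ≠ P →
      ∃ s ∈ D, Distinguishes 𝒰 s P Q}

/-- `S_k`: the separations of order less than `k`. -/
def Sk (𝒱 : SubmodUniverse U) (k : ℕ) : Set U := {s | 𝒱.ord s < k}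

/-- `s` distinguishes `P` and `Q` efficiently. -/
def EffDistinguishes (𝒱 : SubmodUniverse U) (s : U) (P Q : Set U) : Prop :=
  Distinguishes 𝒱.toSepUniverse s P Q ∧
    ∀ t : U, Distinguishes 𝒱.toSepUniverse t P Q → 𝒱.ord s ≤ 𝒱.ord t

/-- Property `Eff(P)` of a star `σ`. -/
def EffProp (𝒱 : SubmodUniverse U) (σ P : Set U) : Prop :=
  ¬ ∃ s ∈ σ, ∃ s' ∈ P, s ≤ s' ∧ 𝒱.ord s' < 𝒱.ord s

/-- `s` is a splice for `r`. -/
def SpliceFor (𝒱 : SubmodUniverse U) (s r : U) : Prop :=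
  r ≤ s ∧ ¬ ∃ t : U, r ≤ t ∧ t ≤ s ∧ 𝒱.ord t < 𝒱.ord s

/-- `s` is a splice between `r₁` and `r₂`. -/
def SpliceBetween (𝒱 : SubmodUniverse U) (s r₁ r₂ : U) : Prop :=
  r₁ ≤ s ∧ s ≤ r₂ ∧ ∀ t : U, r₁ ≤ t → t ≤ r₂ → 𝒱.ord s ≤ 𝒱.ord t

/-- The set `F_e` of stars in `S_k` included in at most one profile of `𝔓` and
satisfying `Eff(P)` whenever included in `P ∈ 𝔓`. -/
def Fe (𝒱 : SubmodUniverse U) (k : ℕ) (𝔓 : Set (Set U)) : Set (Set U) :=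
  {σ | σ ⊆ Sk 𝒱 k ∧ IsStar 𝒱.toSepUniverse σ ∧
    (∀ P ∈ 𝔓, ∀ Q ∈ 𝔓, σ ⊆ P → σ ⊆ Q → P = Q) ∧
    (∀ P ∈ 𝔓, σ ⊆ P → EffProp 𝒱 σ P)}

/-- `δ_e(P)`: the minimum size of a star `σ ⊆ P` with `Eff(P)` such that every
other regular profile of `S_k` contains the inverse of some element of `σ`. -/
noncomputable def deltaE (𝒱 : SubmodUniverse U) (k : ℕ) (P : Set U) : ℕ :=
  sInf {n | ∃ σ : Set U, σ ⊆ P ∧ IsStar 𝒱.toSepUniverse σ ∧ EffProp 𝒱 σ P ∧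
    σ.ncard = n ∧
    ∀ Q : Set U, IsProfile 𝒱.toSepUniverse (Sk 𝒱 k) Q → Regular 𝒱.toSepUniverse Q →
      Q ≠ P → ∃ s ∈ σ, 𝒱.inv s ∈ Q}

/-- `δ_{e,max}`: maximum of `δ_e` over all regular profiles of `S_k`. -/
noncomputable def deltaEMax (𝒱 : SubmodUniverse U) (k : ℕ) : ℕ :=
  sSup {n | ∃ P : Set U, IsProfile 𝒱.toSepUniverse (Sk 𝒱 k) P ∧
    Regular 𝒱.toSepUniverse P ∧ deltaE 𝒱 k P = n}

/-- `P` is a profile in `U`: a `k`-profile for some `k`. -/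
def ProfileIn (𝒱 : SubmodUniverse U) (P : Set U) : Prop :=
  ∃ k : ℕ, IsProfile 𝒱.toSepUniverse (Sk 𝒱 k) P

/-- Strong robustness of a profile. -/
def StronglyRobust (𝒱 : SubmodUniverse U) (P : Set U) : Prop :=
  ∀ s ∈ P, ∀ r : U, 𝒱.ord (s ⊔ r) ≤ 𝒱.ord s → 𝒱.ord (s ⊔ 𝒱.inv r) ≤ 𝒱.ord s →
    (s ⊔ r ∈ P ∨ s ⊔ 𝒱.inv r ∈ P)

/-- `O` weakly orients a separation as `s'` if `s' ≤ r` for some `r ∈ O`. -/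
def WeaklyOrientsAs (O : Set U) (s' : U) : Prop :=
  ∃ r ∈ O, s' ≤ r

/-- `O` weakly orients `s` (as `s` or as `s*`). -/
def WeaklyOrients (𝒰 : SepUniverse U) (O : Set U) (s : U) : Prop :=
  WeaklyOrientsAs O s ∨ WeaklyOrientsAs O (𝒰.inv s)

/-- The set `F_d` of stars, relative to the set of profiles `𝔓`. -/
def Fd (𝒱 : SubmodUniverse U) (𝔓 : Set (Set U)) : Set (Set U) :=
  {σ | IsStar 𝒱.toSepUniverse σ ∧
    (∀ P ∈ 𝔓, ∀ Q ∈ 𝔓, σ ⊆ P → σ ⊆ Q → P = Q) ∧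
    (∀ P ∈ 𝔓, ¬ σ ⊆ P → ∃ s ∈ σ, WeaklyOrientsAs P (𝒱.inv s)) ∧
    (∀ P ∈ 𝔓, σ ⊆ P → EffProp 𝒱 σ P)}
-- ===================== auxiliary lemmas =====================
section Aux
variable (𝒰 : SepUniverse U)

lemma inv_le_iff {a b : U} : 𝒰.inv a ≤ b ↔ 𝒰.inv b ≤ a := by
  rw [𝒰.le_iff (𝒰.inv a) b, 𝒰.inv_inv]

lemma le_inv_iff {a b : U} : a ≤ 𝒰.inv b ↔ b ≤ 𝒰.inv a := by
  rw [𝒰.le_iff a (𝒰.inv b), 𝒰.inv_inv]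

lemma inv_sup (a b : U) : 𝒰.inv (a ⊔ b) = 𝒰.inv a ⊓ 𝒰.inv b := by
  apply le_antisymm
  · exact le_inf ((𝒰.le_iff a (a ⊔ b)).1 le_sup_left) ((𝒰.le_iff b (a ⊔ b)).1 le_sup_right)
  · have h : a ⊔ b ≤ 𝒰.inv (𝒰.inv a ⊓ 𝒰.inv b) := by
      apply sup_le
      · rw [le_inv_iff]; exact inf_le_left
      · rw [le_inv_iff]; exact inf_le_right
    have := (𝒰.le_iff (a ⊔ b) (𝒰.inv (𝒰.inv a ⊓ 𝒰.inv b))).1 h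
    rwa [𝒰.inv_inv] at this

lemma inv_inf (a b : U) : 𝒰.inv (a ⊓ b) = 𝒰.inv a ⊔ 𝒰.inv b := by
  have := inv_sup 𝒰 (𝒰.inv a) (𝒰.inv b)
  rw [𝒰.inv_inv, 𝒰.inv_inv] at this
  rw [← this, 𝒰.inv_inv]

lemma nested_refl (r : U) : Nested 𝒰 r r := Or.inl le_rfl

lemma nested_comm {r s : U} (h : Nested 𝒰 r s) : Nested 𝒰 s r := by
  rcases h with h | h | h | h
  · exact Or.inr (Or.inr (Or.inr ((𝒰.le_iff r s).1 h)))
  · have := (le_inv_iff 𝒰).1 h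
    exact Or.inr (Or.inl this)
  · have := (inv_le_iff 𝒰).1 h
    exact Or.inr (Or.inr (Or.inl this))
  · have := (𝒰.le_iff (𝒰.inv r) (𝒰.inv s)).1 h
    rw [𝒰.inv_inv, 𝒰.inv_inv] at this
    exact Or.inl this

lemma nested_inv_right {r s : U} : Nested 𝒰 r (𝒰.inv s) ↔ Nested 𝒰 r s := by
  unfold Nested; rw [𝒰.inv_inv]; tauto

lemma nested_inv_left {r s : U} : Nested 𝒰 (𝒰.inv r) s ↔ Nested 𝒰 r s := by
  unfold Nested; rw [𝒰.inv_inv]; tauto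

/-- any inequality between orientations of `r` and of `s` yields nestedness. -/
lemma nested_of_orient_le {r s x y : U} (hx : x = r ∨ x = 𝒰.inv r)
    (hy : y = s ∨ y = 𝒰.inv s) (h : x ≤ y) : Nested 𝒰 r s := by
  have hxy : Nested 𝒰 x y := Or.inl h
  rcases hx with rfl | rfl <;> rcases hy with rfl | rfl
  · exact hxy
  · exact (nested_inv_right 𝒰).1 hxy
  · exact (nested_inv_left 𝒰).1 hxy
  · exact (nested_inv_left 𝒰).1 ((nested_inv_right 𝒰).1 hxy)

lemma nested_sup_left {r x y : U} (hx : x = r ∨ x = 𝒰.inv r) :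
    Nested 𝒰 (x ⊔ y) r := by
  have h2 : Nested 𝒰 (x ⊔ y) x := nested_comm 𝒰 (Or.inl le_sup_left)
  rcases hx with rfl | rfl
  · exact h2
  · exact (nested_inv_right 𝒰).1 h2

lemma nested_sup_right {s x y : U} (hy : y = s ∨ y = 𝒰.inv s) :
    Nested 𝒰 (x ⊔ y) s := by
  have h2 : Nested 𝒰 (x ⊔ y) y := nested_comm 𝒰 (Or.inl le_sup_right)
  rcases hy with rfl | rfl
  · exact h2
  · exact (nested_inv_right 𝒰).1 h2

lemma orient_inv {r x : U} (hx : x = r ∨ x = 𝒰.inv r) :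
    𝒰.inv x = r ∨ 𝒰.inv x = 𝒰.inv r := by
  rcases hx with rfl | rfl
  · exact Or.inr rfl
  · exact Or.inl (𝒰.inv_inv r)

/-- corners inherit nestedness with anything nested with both (crossing) parents. -/
lemma nested_inherit {r s x y z : U} (hcross : ¬ Nested 𝒰 r s)
    (hx : x = r ∨ x = 𝒰.inv r) (hy : y = s ∨ y = 𝒰.inv s)
    (hzr : Nested 𝒰 z r) (hzs : Nested 𝒰 z s) : Nested 𝒰 z (x ⊔ y) := by
  have hzx : Nested 𝒰 z x := by
    rcases hx with rfl | rfl
    · exact hzr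
    · exact (nested_inv_right 𝒰).2 hzr
  have hzy : Nested 𝒰 z y := by
    rcases hy with rfl | rfl
    · exact hzs
    · exact (nested_inv_right 𝒰).2 hzs
  have hinv : 𝒰.inv (x ⊔ y) = 𝒰.inv x ⊓ 𝒰.inv y := inv_sup 𝒰 x y
  rcases hzx with h1 | h1 | h1 | h1
  · exact Or.inl (h1.trans le_sup_left)
  · -- z ≤ inv x
    rcases hzy with h2 | h2 | h2 | h2
    · exact Or.inl (h2.trans le_sup_right)
    · exact Or.inr (Or.inl (by rw [hinv]; exact le_inf h1 h2))
    · exact Or.inr (Or.inr (Or.inl (h2.trans le_sup_right)))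
    · -- inv z ≤ inv y, i.e. y ≤ z ≤ inv x : contradiction
      exfalso
      have hyz : y ≤ 𝒰.inv x := by
        have : y ≤ z := by
          have := (𝒰.le_iff (𝒰.inv z) (𝒰.inv y)).1 h2
          rwa [𝒰.inv_inv, 𝒰.inv_inv] at this
        exact this.trans h1
      exact hcross (nested_comm 𝒰 (nested_of_orient_le 𝒰 hy (orient_inv 𝒰 hx) hyz))
  · exact Or.inr (Or.inr (Or.inl (h1.trans le_sup_left)))
  · -- inv z ≤ inv x, i.e. x ≤ z
    have hxz : x ≤ z := by
      have := (𝒰.le_iff (𝒰.inv z) (𝒰.inv x)).1 h1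
      rwa [𝒰.inv_inv, 𝒰.inv_inv] at this
    rcases hzy with h2 | h2 | h2 | h2
    · exact absurd (nested_of_orient_le 𝒰 hx hy (hxz.trans h2)) hcross
    · exact absurd (nested_of_orient_le 𝒰 hx (orient_inv 𝒰 hy) (hxz.trans h2)) hcross
    · exact Or.inr (Or.inr (Or.inl (h2.trans le_sup_right)))
    · exact Or.inr (Or.inr (Or.inr (by rw [hinv]; exact le_inf h1 h2)))

end Aux

-- ===================== profile lemmas =====================
section Prof
variable (𝒰 : SepUniverse U) {S P : Set U}

lemma prof_sub (h : IsProfile 𝒰 S P) : P ⊆ S := h.1.1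

lemma prof_total (h : IsProfile 𝒰 S P) {s : U} (hs : s ∈ S) :
    s ∈ P ∨ 𝒰.inv s ∈ P := (h.1.2 s hs).1

lemma prof_inv_not_mem (h : IsProfile 𝒰 S P) {a : U} (ha : a ∈ P) :
    𝒰.inv a ∉ P := by
  have := h.2.2 a ha a ha
  rwa [sup_idem] at this

lemma prof_ne_inv (h : IsProfile 𝒰 S P) {a : U} (ha : a ∈ P) : a ≠ 𝒰.inv a :=
  fun he => prof_inv_not_mem 𝒰 h ha (he ▸ ha)

/-- downward closure (within S, for distinct inverse-pairs). -/
lemma prof_le_mem (h : IsProfile 𝒰 S P) {a c : U} (hcS : c ∈ S) (ha : a ∈ P)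
    (hle : c ≤ a) (hpair : ({c, 𝒰.inv c} : Set U) ≠ {a, 𝒰.inv a}) : c ∈ P := by
  rcases prof_total 𝒰 h hcS with h' | h'
  · exact h'
  · exfalso
    have hcons := h.2.1 (𝒰.inv c) h' a ha
    rw [𝒰.inv_inv] at hcons
    refine hcons ?_ hle
    rw [Set.pair_comm]
    exact hpair

lemma prof_sup_mem (h : IsProfile 𝒰 S P) {a b : U} (ha : a ∈ P) (hb : b ∈ P)
    (hS' : a ⊔ b ∈ S) : a ⊔ b ∈ P := by
  rcases prof_total 𝒰 h hS' with h' | h'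
  · exact h'
  · exact absurd h' (h.2.2 a ha b hb)

/-- corner rule: if `inv x ∈ P` then `inv (x ⊔ y) ∈ P`. -/
lemma prof_corner (h : IsProfile 𝒰 S P) {x y : U} (hxS : x ∈ S) (hc : x ⊔ y ∈ S)
    (hx : 𝒰.inv x ∈ P)
    (hpair : ({x, 𝒰.inv x} : Set U) ≠ {x ⊔ y, 𝒰.inv (x ⊔ y)}) :
    𝒰.inv (x ⊔ y) ∈ P := by
  rcases prof_total 𝒰 h hc with h' | h'
  · exfalso
    have hxP : x ∈ P := prof_le_mem 𝒰 h hxS h' le_sup_left hpair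
    exact prof_inv_not_mem 𝒰 h hx (by rwa [𝒰.inv_inv])
  · exact h'

/-- if the inverse of `u` lies in a profile, then `u` is nontrivial. -/
lemma dist_not_trivial (h : IsProfile 𝒰 S P) {u : U} (hu : 𝒰.inv u ∈ P) :
    ¬ IsTrivialIn 𝒰 S u := by
  rintro ⟨r, hrS, hpair, h1, h2⟩
  have hpair' : ({𝒰.inv u, 𝒰.inv (𝒰.inv u)} : Set U) ≠ ({r, 𝒰.inv r} : Set U) := by
    rw [𝒰.inv_inv, Set.pair_comm]
    exact fun hh => hpair hh.symm
  rcases prof_total 𝒰 h hrS with h' | h'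
  · have hcons := h.2.1 (𝒰.inv u) hu r h' hpair'
    rw [𝒰.inv_inv] at hcons
    exact hcons h1
  · have hpair'' : ({𝒰.inv u, 𝒰.inv (𝒰.inv u)} : Set U) ≠ ({𝒰.inv r, 𝒰.inv (𝒰.inv r)} : Set U) := by
      rw [𝒰.inv_inv, 𝒰.inv_inv, Set.pair_comm, Set.pair_comm (𝒰.inv r) r]
      exact fun hh => hpair hh.symm
    have hcons := h.2.1 (𝒰.inv u) hu (𝒰.inv r) h' hpair''
    rw [𝒰.inv_inv] at hcons
    exact hcons h2

/-- distinct profiles are distinguished. -/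
lemma prof_dist_nonempty {Q : Set U} (hP : IsProfile 𝒰 S P) (hQ : IsProfile 𝒰 S Q)
    (hne : P ≠ Q) : ∃ u, u ∈ S ∧ Distinguishes 𝒰 u P Q := by
  have hex : ∃ u, (u ∈ P ∧ u ∉ Q) ∨ (u ∉ P ∧ u ∈ Q) := by
    by_contra hc
    push_neg at hc
    apply hne
    ext u
    constructor
    · intro hu
      exact (hc u).1 hu
    · intro hu
      exact by_contra fun hp => ((hc u).2 hp) hu
  obtain ⟨u, h | h⟩ := hex
  · have huS := prof_sub 𝒰 hP h.1
    rcases prof_total 𝒰 hQ huS with h' | h'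
    · exact absurd h' h.2
    · exact ⟨u, huS, Or.inl ⟨h.1, h'⟩⟩
  · have huS := prof_sub 𝒰 hQ h.2
    rcases prof_total 𝒰 hP huS with h' | h'
    · exact absurd h' h.1
    · exact ⟨u, huS, Or.inr ⟨h', h.2⟩⟩

end Prof

-- ===================== pair-distinctness helper =====================
section PairNe
variable (𝒰 : SepUniverse U)

lemma pair_ne_corner {r s x y : U} (hcross : ¬ Nested 𝒰 r s)
    (hx : x = r ∨ x = 𝒰.inv r) (hy : y = s ∨ y = 𝒰.inv s) :
    ({x, 𝒰.inv x} : Set U) ≠ ({x ⊔ y, 𝒰.inv (x ⊔ y)} : Set U) := by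
  intro h
  have hmem : (x ⊔ y) ∈ ({x, 𝒰.inv x} : Set U) := by
    rw [h]; exact Set.mem_insert _ _
  rcases Set.mem_insert_iff.1 hmem with h1 | h1
  · have hle : y ≤ x := by
      conv_rhs => rw [← h1]
      exact le_sup_right
    exact hcross (nested_comm 𝒰 (nested_of_orient_le 𝒰 hy hx hle))
  · rw [Set.mem_singleton_iff] at h1
    have hle : y ≤ 𝒰.inv x := by
      conv_rhs => rw [← h1]
      exact le_sup_right
    exact hcross (nested_comm 𝒰 (nested_of_orient_le 𝒰 hy (orient_inv 𝒰 hx) hle))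

end PairNe

-- ===================== the crossing lemma =====================
section Crossing
variable (𝒰 : SepUniverse U) {S : Set U}

lemma crossing_core {P Q P' Q' : Set U}
    (hS : SepSystem 𝒰 S) (hsub : StructSubmodular S)
    (hP : IsProfile 𝒰 S P) (hQ : IsProfile 𝒰 S Q)
    (hP' : IsProfile 𝒰 S P') (hQ' : IsProfile 𝒰 S Q')
    {r s : U} (hrP : r ∈ P) (hrQ : 𝒰.inv r ∈ Q) (hsP : s ∈ P') (hsQ : 𝒰.inv s ∈ Q')
    (hcross : ¬ Nested 𝒰 r s) :
    ∃ c, Nested 𝒰 c r ∧ Nested 𝒰 c s ∧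
      (∀ z, Nested 𝒰 z r → Nested 𝒰 z s → Nested 𝒰 z c) ∧
      ((c ∈ S ∧ Distinguishes 𝒰 c P Q) ∨ (c ∈ S ∧ Distinguishes 𝒰 c P' Q')) := by
  have hrS : r ∈ S := prof_sub 𝒰 hP hrP
  have hsS : s ∈ S := prof_sub 𝒰 hP' hsP
  have hcross' : ¬ Nested 𝒰 s r := fun h => hcross (nested_comm 𝒰 h)
  -- σ : P's orientation of s
  obtain ⟨σ, hσP, hσor⟩ : ∃ σ, σ ∈ P ∧ (σ = s ∨ σ = 𝒰.inv s) := by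
    rcases prof_total 𝒰 hP hsS with h | h
    · exact ⟨s, h, Or.inl rfl⟩
    · exact ⟨𝒰.inv s, h, Or.inr rfl⟩
  have hσS : σ ∈ S := prof_sub 𝒰 hP hσP
  by_cases hC1 : r ⊔ σ ∈ S
  · -- corner r ⊔ σ distinguishes P,Q
    refine ⟨r ⊔ σ, nested_sup_left 𝒰 (Or.inl rfl), nested_sup_right 𝒰 hσor,
      fun z hzr hzs => nested_inherit 𝒰 hcross (Or.inl rfl) hσor hzr hzs,
      Or.inl ⟨hC1, Or.inl ⟨prof_sup_mem 𝒰 hP hrP hσP hC1,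
        prof_corner 𝒰 hQ hrS hC1 hrQ (pair_ne_corner 𝒰 hcross (Or.inl rfl) hσor)⟩⟩⟩
  · have hmeet : r ⊓ σ ∈ S := (hsub r hrS σ hσS).resolve_left hC1
    have hC2 : 𝒰.inv r ⊔ 𝒰.inv σ ∈ S := by
      have := hS _ hmeet
      rwa [inv_inf] at this
    -- τ : Q's orientation of s
    obtain ⟨τ, hτQ, hτor⟩ : ∃ τ, τ ∈ Q ∧ (τ = s ∨ τ = 𝒰.inv s) := by
      rcases prof_total 𝒰 hQ hsS with h | h
      · exact ⟨s, h, Or.inl rfl⟩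
      · exact ⟨𝒰.inv s, h, Or.inr rfl⟩
    have hsne : s ≠ 𝒰.inv s := prof_ne_inv 𝒰 hP' hsP
    have hinvrS : 𝒰.inv r ∈ S := hS r hrS
    have hinvror : 𝒰.inv r = r ∨ 𝒰.inv r = 𝒰.inv r := Or.inr rfl
    by_cases hττ : τ = σ
    · -- Q agrees with P on s
      by_cases hC3 : 𝒰.inv r ⊔ σ ∈ S
      · -- corner (inv r) ⊔ σ distinguishes P,Q (reverse orientation)
        have hcQ : 𝒰.inv r ⊔ σ ∈ Q := prof_sup_mem 𝒰 hQ hrQ (hττ ▸ hτQ) hC3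
        have hcP : 𝒰.inv (𝒰.inv r ⊔ σ) ∈ P := by
          refine prof_corner 𝒰 hP hinvrS hC3 (by rwa [𝒰.inv_inv]) ?_
          exact pair_ne_corner 𝒰 hcross hinvror hσor
        exact ⟨𝒰.inv r ⊔ σ, nested_sup_left 𝒰 hinvror, nested_sup_right 𝒰 hσor,
          fun z hzr hzs => nested_inherit 𝒰 hcross hinvror hσor hzr hzs,
          Or.inl ⟨hC3, Or.inr ⟨hcP, hcQ⟩⟩⟩
      · -- 3b: corner into P',Q'
        have hmeet2 : 𝒰.inv r ⊓ σ ∈ S := (hsub _ hinvrS σ hσS).resolve_left hC3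
        have hC4 : r ⊔ 𝒰.inv σ ∈ S := by
          have := hS _ hmeet2
          rwa [inv_inf, 𝒰.inv_inv] at this
        -- X := the profile among P',Q' containing inv σ ; Y the other
        -- unified handling:
        obtain ⟨X, Y, hX, hY, hinvσX, hσY, hgoal⟩ :
            ∃ X Y, IsProfile 𝒰 S X ∧ IsProfile 𝒰 S Y ∧ 𝒰.inv σ ∈ X ∧ σ ∈ Y ∧
              (∀ c, c ∈ X → 𝒰.inv c ∈ Y → Distinguishes 𝒰 c P' Q') := by
          rcases hσor with h | h
          · -- σ = s : inv σ = inv s ∈ Q'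
            subst h
            exact ⟨Q', P', hQ', hP', hsQ, hsP, fun c hc hc' => Or.inr ⟨hc', hc⟩⟩
          · -- σ = inv s : inv σ = s ∈ P'
            subst h
            refine ⟨P', Q', hP', hQ', by rwa [𝒰.inv_inv], hsQ, fun c hc hc' => Or.inl ⟨hc, hc'⟩⟩
        -- ρ : X's orientation of r
        obtain ⟨ρ, hρX, hρor⟩ : ∃ ρ, ρ ∈ X ∧ (ρ = r ∨ ρ = 𝒰.inv r) := by
          rcases prof_total 𝒰 hX hrS with h | h
          · exact ⟨r, h, Or.inl rfl⟩
          · exact ⟨𝒰.inv r, h, Or.inr rfl⟩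
        have hinvσor : 𝒰.inv σ = s ∨ 𝒰.inv σ = 𝒰.inv s := orient_inv 𝒰 hσor
        have hcS : ρ ⊔ 𝒰.inv σ ∈ S := by
          rcases hρor with h | h
          · rw [h]; exact hC4
          · rw [h]; exact hC2
        have hcX : ρ ⊔ 𝒰.inv σ ∈ X := prof_sup_mem 𝒰 hX hρX hinvσX hcS
        have hcY : 𝒰.inv (ρ ⊔ 𝒰.inv σ) ∈ Y := by
          rw [sup_comm]
          have hcS' : 𝒰.inv σ ⊔ ρ ∈ S := by rwa [sup_comm] at hcS
          refine prof_corner 𝒰 hY (hS σ hσS) hcS' (by rwa [𝒰.inv_inv]) ?_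
          exact pair_ne_corner 𝒰 hcross' hinvσor hρor
        refine ⟨ρ ⊔ 𝒰.inv σ, nested_sup_left 𝒰 hρor, nested_sup_right 𝒰 hinvσor,
          fun z hzr hzs => nested_inherit 𝒰 hcross hρor hinvσor hzr hzs,
          Or.inr ⟨hcS, hgoal _ hcX hcY⟩⟩
    · -- τ = inv σ : corner (inv r) ⊔ τ distinguishes P,Q
      have hτσ : τ = 𝒰.inv σ := by
        rcases hσor with h | h <;> rcases hτor with h' | h'
        · exact absurd (h'.trans h.symm) hττ
        · rw [h', h]
        · rw [h', h, 𝒰.inv_inv]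
        · exact absurd (h'.trans h.symm) hττ
      have hcS : 𝒰.inv r ⊔ τ ∈ S := by rw [hτσ]; exact hC2
      have hτor' : τ = s ∨ τ = 𝒰.inv s := hτor
      have hcQ : 𝒰.inv r ⊔ τ ∈ Q := prof_sup_mem 𝒰 hQ hrQ hτQ hcS
      have hcP : 𝒰.inv (𝒰.inv r ⊔ τ) ∈ P := by
        refine prof_corner 𝒰 hP hinvrS hcS (by rwa [𝒰.inv_inv]) ?_
        exact pair_ne_corner 𝒰 hcross hinvror hτor'
      exact ⟨𝒰.inv r ⊔ τ, nested_sup_left 𝒰 hinvror, nested_sup_right 𝒰 hτor',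
        fun z hzr hzs => nested_inherit 𝒰 hcross hinvror hτor' hzr hzs,
        Or.inl ⟨hcS, Or.inr ⟨hcP, hcQ⟩⟩⟩

end Crossing

-- ===================== the splinter lemma =====================
section Splinter
variable (𝒰 : SepUniverse U)

/-- Abstract splinter lemma: a finite family of nonempty sets such that any two
crossing members of (possibly equal) sets admit a "corner" in the union of the two
sets, nested with both and inheriting common nestedness, has a nested choice. -/
lemma splinter_lemma {ι : Type*} [DecidableEq ι] (I : Finset ι) :
    ∀ A : ι → Set U,
      (∀ i ∈ I, (A i).Nonempty) →
      (∀ i ∈ I, ∀ j ∈ I, ∀ x ∈ A i, ∀ y ∈ A j, ¬ Nested 𝒰 x y →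
        ∃ c, (c ∈ A i ∨ c ∈ A j) ∧ Nested 𝒰 c x ∧ Nested 𝒰 c y ∧
          ∀ z, Nested 𝒰 z x → Nested 𝒰 z y → Nested 𝒰 z c) →
      I.Nonempty →
      ∃ f : ι → U, (∀ i ∈ I, f i ∈ A i) ∧
        ∀ i ∈ I, ∀ j ∈ I, Nested 𝒰 (f i) (f j) := by
  induction I using Finset.strongInductionOn with
  | _ I IH =>
  intro A hne hsp hI
  by_cases hgood : ∃ m, (∃ i ∈ I, m ∈ A i) ∧ ∀ j ∈ I, ∃ u ∈ A j, Nested 𝒰 u m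
  · -- a globally good element m: condition on it
    obtain ⟨m, ⟨e₀, he₀, hmA⟩, hm⟩ := hgood
    by_cases hI' : (I.erase e₀).Nonempty
    · have hss : I.erase e₀ ⊂ I := Finset.erase_ssubset he₀
      obtain ⟨f', hf'mem, hf'n⟩ :=
        IH (I.erase e₀) hss (fun i => A i ∩ {u | Nested 𝒰 u m})
          (by
            intro j hj
            obtain ⟨u, huA, hun⟩ := hm j (Finset.mem_of_mem_erase hj)
            exact ⟨u, huA, hun⟩)
          (by
            intro i hi j hj x hx y hy hxy
            obtain ⟨c, hcmem, hcx, hcy, hinh⟩ :=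
              hsp i (Finset.mem_of_mem_erase hi) j (Finset.mem_of_mem_erase hj)
                x hx.1 y hy.1 hxy
            have hcm : Nested 𝒰 c m := by
              have h1 : Nested 𝒰 m x := nested_comm 𝒰 hx.2
              have h2 : Nested 𝒰 m y := nested_comm 𝒰 hy.2
              exact nested_comm 𝒰 (hinh m h1 h2)
            refine ⟨c, ?_, hcx, hcy, hinh⟩
            rcases hcmem with hc | hc
            · exact Or.inl ⟨hc, hcm⟩
            · exact Or.inr ⟨hc, hcm⟩)
          hI'
      refine ⟨fun i => if i = e₀ then m else f' i, ?_, ?_⟩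
      · intro i hi
        by_cases hie : i = e₀
        · subst hie; simpa using hmA
        · simp only [hie, if_false]
          exact (hf'mem i (Finset.mem_erase.2 ⟨hie, hi⟩)).1
      · intro i hi j hj
        by_cases hie : i = e₀ <;> by_cases hje : j = e₀ <;>
          simp only [hie, hje, if_true, if_false]
        · exact nested_refl 𝒰 m
        · exact nested_comm 𝒰 (hf'mem j (Finset.mem_erase.2 ⟨hje, hj⟩)).2
        · exact (hf'mem i (Finset.mem_erase.2 ⟨hie, hi⟩)).2
        · exact hf'n i (Finset.mem_erase.2 ⟨hie, hi⟩) j (Finset.mem_erase.2 ⟨hje, hj⟩)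
    · -- I = {e₀}
      have hJe : ∀ i ∈ I, i = e₀ := by
        intro i hi
        by_contra hne'
        exact hI' ⟨i, Finset.mem_erase.2 ⟨hne', hi⟩⟩
      refine ⟨fun _ => m, ?_, ?_⟩
      · intro i hi
        have := hJe i hi; subst this
        exact hmA
      · intro i _ j _
        exact nested_refl 𝒰 m
  · -- total badness
    push_neg at hgood
    obtain ⟨e, he⟩ := hI
    by_cases hI' : (I.erase e).Nonempty
    · have hss : I.erase e ⊂ I := Finset.erase_ssubset he
      obtain ⟨t, htmem, htn⟩ :=
        IH (I.erase e) hss A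
          (fun i hi => hne i (Finset.mem_of_mem_erase hi))
          (fun i hi j hj => hsp i (Finset.mem_of_mem_erase hi) j (Finset.mem_of_mem_erase hj))
          hI'
      -- every t j is bad exactly at e
      have hbadte : ∀ j ∈ I.erase e, ∀ u ∈ A e, ¬ Nested 𝒰 u (t j) := by
        intro j hj
        obtain ⟨j', hj'I, hb⟩ :=
          hgood (t j) ⟨j, Finset.mem_of_mem_erase hj, htmem j hj⟩
        by_cases hj'e : j' = e
        · subst hj'e; exact hb
        · exfalso
          have hj' : j' ∈ I.erase e := Finset.mem_erase.2 ⟨hj'e, hj'I⟩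
          exact hb (t j') (htmem j' hj') (htn j' hj' j hj)
      obtain ⟨z, hzA⟩ := hne e he
      -- conditioning sets are nonempty
      have hcond : ∀ j ∈ I.erase e, ∃ u, u ∈ A j ∧ Nested 𝒰 u z := by
        intro j hj
        have hcr : ¬ Nested 𝒰 z (t j) := hbadte j hj z hzA
        obtain ⟨c, hcmem, hcz, hct, _⟩ :=
          hsp e he j (Finset.mem_of_mem_erase hj) z hzA (t j) (htmem j hj) hcr
        rcases hcmem with hc | hc
        · exact absurd hct (hbadte j hj c hc)
        · exact ⟨c, hc, hcz⟩
      obtain ⟨f', hf'mem, hf'n⟩ :=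
        IH (I.erase e) hss (fun i => A i ∩ {u | Nested 𝒰 u z})
          (by
            intro j hj
            obtain ⟨u, huA, hun⟩ := hcond j hj
            exact ⟨u, huA, hun⟩)
          (by
            intro i hi j hj x hx y hy hxy
            obtain ⟨c, hcmem, hcx, hcy, hinh⟩ :=
              hsp i (Finset.mem_of_mem_erase hi) j (Finset.mem_of_mem_erase hj)
                x hx.1 y hy.1 hxy
            have hcz : Nested 𝒰 c z := by
              have h1 : Nested 𝒰 z x := nested_comm 𝒰 hx.2
              have h2 : Nested 𝒰 z y := nested_comm 𝒰 hy.2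
              exact nested_comm 𝒰 (hinh z h1 h2)
            refine ⟨c, ?_, hcx, hcy, hinh⟩
            rcases hcmem with hc | hc
            · exact Or.inl ⟨hc, hcz⟩
            · exact Or.inr ⟨hc, hcz⟩)
          hI'
      refine ⟨fun i => if i = e then z else f' i, ?_, ?_⟩
      · intro i hi
        by_cases hie : i = e
        · subst hie; simpa using hzA
        · simp only [hie, if_false]
          exact (hf'mem i (Finset.mem_erase.2 ⟨hie, hi⟩)).1
      · intro i hi j hj
        by_cases hie : i = e <;> by_cases hje : j = e <;>
          simp only [hie, hje, if_true, if_false]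
        · exact nested_refl 𝒰 z
        · exact nested_comm 𝒰 (hf'mem j (Finset.mem_erase.2 ⟨hje, hj⟩)).2
        · exact (hf'mem i (Finset.mem_erase.2 ⟨hie, hi⟩)).2
        · exact hf'n i (Finset.mem_erase.2 ⟨hie, hi⟩) j (Finset.mem_erase.2 ⟨hje, hj⟩)
    · -- I = {e}: contradiction with total badness
      exfalso
      obtain ⟨z, hz⟩ := hne e he
      have hJe : ∀ i ∈ I, i = e := by
        intro i hi
        by_contra hne'
        exact hI' ⟨i, Finset.mem_erase.2 ⟨hne', hi⟩⟩
      obtain ⟨j, hjI, hb⟩ := hgood z ⟨e, he, hz⟩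
      have := hJe j hjI; subst this
      exact hb z hz (nested_refl 𝒰 z)

end Splinter


/-- For a structurally submodular separation system `S` and a
set `𝔓` of profiles of `S`, `S` contains a tree set distinguishing `𝔓`. -/
theorem tree_of_tangles_tree_set (𝒰 : SepUniverse U) (S : Set U)
    (hS : SepSystem 𝒰 S) (hsub : StructSubmodular S)
    (𝔓 : Set (Set U)) (h𝔓 : ∀ P ∈ 𝔓, IsProfile 𝒰 S P) :
    ∃ T : Set U, T ⊆ S ∧ NestedSet 𝒰 T ∧
      (∀ s ∈ T, ¬ IsTrivialIn 𝒰 S s ∧ ¬ IsTrivialIn 𝒰 S (𝒰.inv s)) ∧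
      ∀ P ∈ 𝔓, ∀ Q ∈ 𝔓, P ≠ Q → ∃ s ∈ T, Distinguishes 𝒰 s P Q := by
  classical
  set 𝒜 : Set (Set U) :=
    {A | ∃ P, P ∈ 𝔓 ∧ ∃ Q, Q ∈ 𝔓 ∧ P ≠ Q ∧ A = {u | u ∈ S ∧ Distinguishes 𝒰 u P Q}}
    with h𝒜
  have hfin : 𝒜.Finite := Set.toFinite _
  by_cases hFne : (hfin.toFinset).Nonempty
  · -- apply the splinter lemma
    obtain ⟨f, hfmem, hfn⟩ :=
      splinter_lemma 𝒰 hfin.toFinset (fun A => A)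
        (by
          intro A hA
          rw [Set.Finite.mem_toFinset] at hA
          obtain ⟨P, hP, Q, hQ, hPQ, rfl⟩ := hA
          obtain ⟨u, huS, hud⟩ :=
            prof_dist_nonempty 𝒰 (h𝔓 P hP) (h𝔓 Q hQ) hPQ
          exact ⟨u, huS, hud⟩)
        (by
          intro A hA B hB x hx y hy hxy
          rw [Set.Finite.mem_toFinset] at hA hB
          obtain ⟨P₁, hP₁, Q₁, hQ₁, hne₁, rfl⟩ := hA
          obtain ⟨P₂, hP₂, Q₂, hQ₂, hne₂, rfl⟩ := hB
          obtain ⟨hxS, hxd⟩ := hx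
          obtain ⟨hyS, hyd⟩ := hy
          -- choose orientations
          obtain ⟨r, hrP, hrQ, hror⟩ :
              ∃ r, r ∈ P₁ ∧ 𝒰.inv r ∈ Q₁ ∧ (r = x ∨ r = 𝒰.inv x) := by
            rcases hxd with ⟨h1, h2⟩ | ⟨h1, h2⟩
            · exact ⟨x, h1, h2, Or.inl rfl⟩
            · exact ⟨𝒰.inv x, h1, by rwa [𝒰.inv_inv], Or.inr rfl⟩
          obtain ⟨s', hsP, hsQ, hsor⟩ :
              ∃ s', s' ∈ P₂ ∧ 𝒰.inv s' ∈ Q₂ ∧ (s' = y ∨ s' = 𝒰.inv y) := by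
            rcases hyd with ⟨h1, h2⟩ | ⟨h1, h2⟩
            · exact ⟨y, h1, h2, Or.inl rfl⟩
            · exact ⟨𝒰.inv y, h1, by rwa [𝒰.inv_inv], Or.inr rfl⟩
          have hcross : ¬ Nested 𝒰 r s' := by
            intro h
            apply hxy
            have h1 : Nested 𝒰 x s' := by
              rcases hror with rfl | h'
              · exact h
              · rw [h'] at h; exact (nested_inv_left 𝒰).1 h
            rcases hsor with rfl | h'
            · exact h1
            · rw [h'] at h1; exact (nested_inv_right 𝒰).1 h1
          obtain ⟨c, hcr, hcs, hinh, hmem⟩ :=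
            crossing_core 𝒰 hS hsub (h𝔓 P₁ hP₁) (h𝔓 Q₁ hQ₁) (h𝔓 P₂ hP₂) (h𝔓 Q₂ hQ₂)
              hrP hrQ hsP hsQ hcross
          have hcx : Nested 𝒰 c x := by
            rcases hror with rfl | h'
            · exact hcr
            · rw [h'] at hcr; exact (nested_inv_right 𝒰).1 hcr
          have hcy : Nested 𝒰 c y := by
            rcases hsor with rfl | h'
            · exact hcs
            · rw [h'] at hcs; exact (nested_inv_right 𝒰).1 hcs
          refine ⟨c, ?_, hcx, hcy, ?_⟩
          · rcases hmem with ⟨hcS, hcd⟩ | ⟨hcS, hcd⟩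
            · exact Or.inl ⟨hcS, hcd⟩
            · exact Or.inr ⟨hcS, hcd⟩
          · intro z hzx hzy
            have hzr : Nested 𝒰 z r := by
              rcases hror with rfl | h'
              · exact hzx
              · rw [h']; exact (nested_inv_right 𝒰).2 hzx
            have hzs : Nested 𝒰 z s' := by
              rcases hsor with rfl | h'
              · exact hzy
              · rw [h']; exact (nested_inv_right 𝒰).2 hzy
            exact hinh z hzr hzs)
        hFne
    refine ⟨f '' ↑hfin.toFinset, ?_, ?_, ?_, ?_⟩
    · rintro u ⟨A, hA, rfl⟩
      have hA' : A ∈ hfin.toFinset := by simpa using hA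
      have := hfmem A hA'
      have hA'' := hA'
      rw [Set.Finite.mem_toFinset] at hA''
      obtain ⟨P, hP, Q, hQ, hPQ, rfl⟩ := hA''
      exact this.1
    · rintro u ⟨A, hA, rfl⟩ v ⟨B, hB, rfl⟩
      have hA' : A ∈ hfin.toFinset := by simpa using hA
      have hB' : B ∈ hfin.toFinset := by simpa using hB
      exact hfn A hA' B hB'
    · rintro u ⟨A, hA, rfl⟩
      have hA' : A ∈ hfin.toFinset := by simpa using hA
      have hmem := hfmem A hA'
      rw [Set.Finite.mem_toFinset] at hA'
      obtain ⟨P, hP, Q, hQ, hPQ, rfl⟩ := hA'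
      obtain ⟨-, hd⟩ := hmem
      rcases hd with ⟨h1, h2⟩ | ⟨h1, h2⟩
      · refine ⟨dist_not_trivial 𝒰 (h𝔓 Q hQ) h2, ?_⟩
        exact dist_not_trivial 𝒰 (h𝔓 P hP) (by rwa [𝒰.inv_inv])
      · refine ⟨dist_not_trivial 𝒰 (h𝔓 P hP) h1, ?_⟩
        exact dist_not_trivial 𝒰 (h𝔓 Q hQ) (by rwa [𝒰.inv_inv])
    · intro P hP Q hQ hPQ
      have hAmem : ({u | u ∈ S ∧ Distinguishes 𝒰 u P Q} : Set U) ∈ hfin.toFinset := by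
        rw [Set.Finite.mem_toFinset]
        exact ⟨P, hP, Q, hQ, hPQ, rfl⟩
      refine ⟨f {u | u ∈ S ∧ Distinguishes 𝒰 u P Q}, ⟨_, by simpa using hAmem, rfl⟩, ?_⟩
      exact (hfmem _ hAmem).2
  · -- no distinguishable pairs at all
    refine ⟨∅, by simp, ?_, ?_, ?_⟩
    · intro r hr; cases hr
    · intro s hs; cases hs
    · intro P hP Q hQ hPQ
      exfalso
      apply hFne
      refine ⟨{u | u ∈ S ∧ Distinguishes 𝒰 u P Q}, ?_⟩
      rw [Set.Finite.mem_toFinset]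
      exact ⟨P, hP, Q, hQ, hPQ, rfl⟩



end SepDemo
end

section
/- Let U be a universe of separations, S ⊆ U a structurally submodular separation system, and 𝒫 a set of profiles of S. Then every consistent orientation O of S that is not a member of 𝒫 includes a star σ ⊆ O that is included in no profile belonging to 𝒫. -/
namespace SepDemo

variable {U : Type*} [Lattice U] [Fintype U]

/-! Induct on the finite set `𝔓`. Given a star `σ ⊆ O` escaping the profiles treated so far and
a new profile `P ⊇ σ` with `P ≠ O`, pick `t` minimal in `O \ P` and pass to the star
`{t} ∪ {x ⊓ t* : x ∈ σ}`. Structural submodularity and the minimality of `t` keep each `x ⊓ t*`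
in `O`; the new star escapes `P` because `t ∉ P`, and a profile containing `t` and
`x ⊓ t* = (x* ⊔ t)*` cannot contain `x*`, so it contains `x`: the new star escapes every profile
the old one escaped. -/

namespace SepUniverse

variable (𝒰 : SepUniverse U)

lemma inv_le_inv {r s : U} (h : r ≤ s) : 𝒰.inv s ≤ 𝒰.inv r := (𝒰.le_iff r s).mp h

lemma le_inv_comm {a b : U} : a ≤ 𝒰.inv b ↔ b ≤ 𝒰.inv a := by
  refine ⟨fun h => ?_, fun h => ?_⟩ <;> simpa only [𝒰.inv_inv] using 𝒰.inv_le_inv h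

lemma inv_injective : Function.Injective 𝒰.inv :=
  Function.LeftInverse.injective 𝒰.inv_inv

lemma inv_sup (r s : U) : 𝒰.inv (r ⊔ s) = 𝒰.inv r ⊓ 𝒰.inv s :=
  le_antisymm (le_inf (𝒰.inv_le_inv le_sup_left) (𝒰.inv_le_inv le_sup_right))
    ((𝒰.le_inv_comm).mp (sup_le ((𝒰.le_inv_comm).mp inf_le_left)
      ((𝒰.le_inv_comm).mp inf_le_right)))

end SepUniverse

section Orientations

variable {𝒰 : SepUniverse U} {S O P : Set U}

lemma IsOrientation.inv_mem (hO : IsOrientation 𝒰 S O) {s : U} (hs : s ∈ S) (hsO : s ∉ O) :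
    𝒰.inv s ∈ O :=
  ((hO.2 s hs).1).resolve_left hsO

lemma IsOrientation.eq_of_subset (hO : IsOrientation 𝒰 S O) (hP : IsOrientation 𝒰 S P)
    (hOP : O ⊆ P) : O = P := by
  refine hOP.antisymm fun p hp => ?_
  by_contra hpO
  have hinv := hO.inv_mem (hP.1 hp) hpO
  exact hpO (by rwa [← (hP.2 p (hP.1 hp)).2 hp (hOP hinv)] at hinv)

lemma Consistent.not_inv_le (hc : Consistent 𝒰 O) {r s : U} (hr : r ∈ O) (hs : s ∈ O)
    (hrs : r ≠ s) (hrs' : r ≠ 𝒰.inv s) : ¬ 𝒰.inv r ≤ s := by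
  refine hc r hr s hs fun h => ?_
  have : r ∈ ({s, 𝒰.inv s} : Set U) := h ▸ Set.mem_insert r _
  rcases this with h' | h'
  exacts [hrs h', hrs' h']

lemma Consistent.mem_of_le (hc : Consistent 𝒰 O) (hO : IsOrientation 𝒰 S O) {x m : U}
    (hx : x ∈ O) (hm : m ∈ S) (hmx : m ≤ x) (hxm : x ≠ 𝒰.inv m) : m ∈ O := by
  by_contra hmO
  refine hc.not_inv_le hx (hO.inv_mem hm hmO) hxm (fun h => hmO ?_) (𝒰.inv_le_inv hmx)
  rw [𝒰.inv_inv] at h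
  rwa [← h]

lemma IsProfile.mem_of_inf_inv_mem (hP : IsProfile 𝒰 S P) {x t : U} (hx : x ∈ S)
    (ht : t ∈ P) (hxt : x ⊓ 𝒰.inv t ∈ P) : x ∈ P := by
  by_contra hxP
  have := hP.2.2 _ (hP.1.inv_mem hx hxP) t ht
  rw [𝒰.inv_sup, 𝒰.inv_inv] at this
  exact this hxt

end Orientations

lemma IsStar.insert_image_inf_inv {𝒰 : SepUniverse U} {σ : Set U} (hσ : IsStar 𝒰 σ) (t : U) :
    IsStar 𝒰 (insert t ((· ⊓ 𝒰.inv t) '' σ)) := by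
  have hle : ∀ x, x ⊓ 𝒰.inv t ≤ 𝒰.inv t := fun _ => inf_le_right
  rintro r (rfl | ⟨x, hx, rfl⟩) s (rfl | ⟨y, hy, rfl⟩) hrs
  · exact absurd rfl hrs
  · exact (𝒰.le_inv_comm).mp (hle y)
  · exact hle x
  · have hxy : x ≠ y := fun h => hrs (h ▸ rfl)
    exact inf_le_left.trans ((hσ x hx y hy hxy).trans (𝒰.inv_le_inv inf_le_left))

section MinimalEscape

variable {𝒰 : SepUniverse U} {S O P : Set U} {t x : U}

/-- If `x ⊔ t*` were in `S`, the profile property would put it in `P`, and consistency of `O`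
would put its inverse `x* ⊓ t ≤ t` in `O \ P`; minimality of `t` then forces `x ≤ t*`. -/
lemma sup_inv_notMem_of_minimal (hO : IsOrientation 𝒰 S O) (hc : Consistent 𝒰 O)
    (hP : IsProfile 𝒰 S P) (ht : Minimal (· ∈ O \ P) t) (hxP : x ∈ P) (hx : ¬ x ≤ 𝒰.inv t) :
    x ⊔ 𝒰.inv t ∉ S := by
  intro hjS
  set j := x ⊔ 𝒰.inv t
  have hjP : j ∈ P := by
    by_contra hjP
    exact hP.2.2 x hxP _ (hP.1.inv_mem (hO.1 ht.1.1) ht.1.2) (hP.1.inv_mem hjS hjP)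
  have hjO : j ∉ O := fun hjO =>
    hc.not_inv_le ht.1.1 hjO (fun h => ht.1.2 (h ▸ hjP))
      (fun h => hx (by rw [h, 𝒰.inv_inv]; exact le_sup_left)) le_sup_right
  have hijP : 𝒰.inv j ∉ P := fun h => hjO ((hP.1.2 j hjS).2 hjP h ▸ hO.inv_mem hjS hjO)
  have hij : 𝒰.inv j = 𝒰.inv x ⊓ t := by rw [𝒰.inv_sup, 𝒰.inv_inv]
  have heq := ht.eq_of_le ⟨hO.inv_mem hjS hjO, hijP⟩ (hij ▸ inf_le_right)
  exact hx ((𝒰.le_inv_comm).mp (heq ▸ hij ▸ inf_le_left))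

lemma inf_inv_mem_of_minimal (hsub : StructSubmodular S) (hO : IsOrientation 𝒰 S O)
    (hc : Consistent 𝒰 O) (hP : IsProfile 𝒰 S P) (ht : Minimal (· ∈ O \ P) t) (hxO : x ∈ O)
    (hxP : x ∈ P) : x ⊓ 𝒰.inv t ∈ O := by
  by_cases hx : x ≤ 𝒰.inv t
  · rwa [inf_eq_left.mpr hx]
  have hitP := hP.1.inv_mem (hO.1 ht.1.1) ht.1.2
  have hmS : x ⊓ 𝒰.inv t ∈ S :=
    (hsub x (hO.1 hxO) _ (hP.1.1 hitP)).resolve_left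
      (sup_inv_notMem_of_minimal hO hc hP ht hxP hx)
  have htx : ¬ t ≤ x := by
    simpa only [𝒰.inv_inv] using hP.2.1.not_inv_le hitP hxP (fun h => hx (h ▸ le_rfl))
      (fun h => ht.1.2 (𝒰.inv_injective h ▸ hxP))
  have hxm : x ≠ 𝒰.inv (x ⊓ 𝒰.inv t) := fun h => by
    have hix : 𝒰.inv x = x ⊓ 𝒰.inv t := by nth_rewrite 1 [h]; exact 𝒰.inv_inv _
    have htix : t ≤ 𝒰.inv (𝒰.inv x) := (𝒰.le_inv_comm).mpr (hix ▸ inf_le_right)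
    exact htx (by rwa [𝒰.inv_inv] at htix)
  exact hc.mem_of_le hO hxO hmS inf_le_left hxm

end MinimalEscape

lemma exists_star_escaping_profile {𝒰 : SepUniverse U} {S O P σ : Set U} (hsub : StructSubmodular S)
    (hO : IsOrientation 𝒰 S O) (hc : Consistent 𝒰 O) (hP : IsProfile 𝒰 S P) (hPO : P ≠ O)
    (hσO : σ ⊆ O) (hσ : IsStar 𝒰 σ) :
    ∃ σ' ⊆ O, IsStar 𝒰 σ' ∧ ¬ σ' ⊆ P ∧ ∀ Q, IsProfile 𝒰 S Q → σ' ⊆ Q → σ ⊆ Q := by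
  by_cases hσP : σ ⊆ P
  swap
  · exact ⟨σ, hσO, hσ, hσP, fun _ _ h => h⟩
  obtain ⟨t₀, ht₀O, ht₀P⟩ : (O \ P).Nonempty :=
    Set.sdiff_nonempty.mpr fun h => hPO (hO.eq_of_subset hP.1 h).symm
  obtain ⟨t, ht⟩ := exists_minimal_of_wellFoundedLT (· ∈ O \ P) ⟨t₀, ht₀O, ht₀P⟩
  refine ⟨insert t ((· ⊓ 𝒰.inv t) '' σ), ?_, hσ.insert_image_inf_inv t,
    fun h => ht.1.2 (h (Set.mem_insert t _)), fun Q hQ hσQ x hx => ?_⟩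
  · rintro _ (rfl | ⟨x, hx, rfl⟩)
    exacts [ht.1.1, inf_inv_mem_of_minimal hsub hO hc hP ht (hσO hx) (hσP hx)]
  · exact hQ.mem_of_inf_inv_mem (hO.1 (hσO hx)) (hσQ (Set.mem_insert t _))
      (hσQ (Set.mem_insert_of_mem t ⟨x, hx, rfl⟩))

theorem non_profile_star_general (𝒰 : SepUniverse U) (S : Set U)
    (hsub : StructSubmodular S)
    (𝔓 : Set (Set U)) (h𝔓 : ∀ P ∈ 𝔓, IsProfile 𝒰 S P)
    (O : Set U) (hO : IsOrientation 𝒰 S O) (hc : Consistent 𝒰 O)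
    (hnot : O ∉ 𝔓) :
    ∃ σ : Set U, σ ⊆ O ∧ IsStar 𝒰 σ ∧ ∀ P ∈ 𝔓, ¬ σ ⊆ P := by
  induction 𝔓, Set.toFinite 𝔓 using Set.Finite.induction_on with
  | empty => exact ⟨∅, Set.empty_subset O, fun _ h => h.elim, by simp⟩
  | @insert P 𝔔 _ _ ih =>
    obtain ⟨σ, hσO, hσ, hσ𝔔⟩ := ih (fun Q hQ => h𝔓 Q (Set.mem_insert_of_mem P hQ))
      (fun h => hnot (Set.mem_insert_of_mem P h))
    obtain ⟨σ', hσ'O, hσ', hσ'P, hσ'σ⟩ := exists_star_escaping_profile hsub hO hc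
      (h𝔓 P (Set.mem_insert P 𝔔)) (fun h => hnot (h ▸ Set.mem_insert P 𝔔)) hσO hσ
    refine ⟨σ', hσ'O, hσ', ?_⟩
    rintro Q (rfl | hQ) hσ'Q
    exacts [hσ'P hσ'Q, hσ𝔔 Q hQ (hσ'σ Q (h𝔓 Q (Set.mem_insert_of_mem P hQ)) hσ'Q)]

/-- Every consistent orientation of a structurally submodular
separation system that is not a member of `𝔓` includes a star included in no
profile belonging to `𝔓`. -/
theorem non_profile_star (𝒰 : SepUniverse U) (S : Set U)
    (hS : SepSystem 𝒰 S) (hsub : StructSubmodular S)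
    (𝔓 : Set (Set U)) (h𝔓 : ∀ P ∈ 𝔓, IsProfile 𝒰 S P)
    (O : Set U) (hO : IsOrientation 𝒰 S O) (hc : Consistent 𝒰 O)
    (hnot : O ∉ 𝔓) :
    ∃ σ : Set U, σ ⊆ O ∧ IsStar 𝒰 σ ∧ ∀ P ∈ 𝔓, ¬ σ ⊆ P :=
  non_profile_star_general 𝒰 S hsub 𝔓 h𝔓 O hO hc hnot

end SepDemo
end
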